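/- arXiv:2102.04045 — 3 statements merged into one kernel-verified Lean document; each statement's English description precedes it below -/
import Mathlib

section
/- Let X be a set and let η : F(X) → D be the Baumslag rationalization of the free group F(X) on X. Let n : X → ℕ assign to each x ∈ X a positive integer n_x ≥ 1. Then the unique group homomorphism Ψ : D → D satisfying Ψ(η(x)) = η(x)^{n_x} for all x ∈ X (which exists by the universal property of D, since D is uniquely divisible) is an automorphism of D, i.e. Ψ is bijective. -/
/-- A group `D` is uniquely divisible if for every nonzero integer `n`
the `n`-th power map is a bijection. -/
def UniquelyDivisible (D : Type*) [Group D] : Prop :=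
  ∀ n : ℤ, n ≠ 0 → Function.Bijective (fun g : D => g ^ n)

/-- `η : G →* D` is a Baumslag rationalization of `G` if `D` is uniquely divisible
and every homomorphism from `G` to a uniquely divisible group factors uniquely
through `η`. -/
def IsBaumslagRationalization {G D : Type*} [Group G] [Group D] (η : G →* D) : Prop :=
  UniquelyDivisible D ∧
    ∀ (Q : Type) (_ : Group Q), UniquelyDivisible Q →
      ∀ f : G →* Q, ∃! h : D →* Q, h.comp η = f


/- Taking `n x`-th roots of the generators in `D` gives, by the universal property, an
endomorphism `Φ` with `Φ (η x) ^ n x = η x`. Both `Ψ ∘ Φ` and `Φ ∘ Ψ` fix every `η x`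
(for `Ψ ∘ Φ` because `n x`-th powers are injective in `D`), so by the uniqueness half of
the universal property both are the identity. -/

namespace IsBaumslagRationalization

theorem hom_ext {G D : Type*} [Group G] [Group D] {η : G →* D}
    (hη : IsBaumslagRationalization η) {Q : Type} [Group Q] (hQ : UniquelyDivisible Q)
    {h₁ h₂ : D →* Q} (h : h₁.comp η = h₂.comp η) : h₁ = h₂ :=
  (hη.2 Q inferInstance hQ (h₂.comp η)).unique h rfl

variable {X D : Type} [Group D] {η : FreeGroup X →* D}

theorem exists_hom_apply_of (hη : IsBaumslagRationalization η) {Q : Type} [Group Q]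
    (hQ : UniquelyDivisible Q) (r : X → Q) :
    ∃ Φ : D →* Q, ∀ x, Φ (η (FreeGroup.of x)) = r x := by
  obtain ⟨Φ, hΦ, -⟩ := hη.2 Q inferInstance hQ (FreeGroup.lift r)
  exact ⟨Φ, fun x => by simpa using DFunLike.congr_fun hΦ (FreeGroup.of x)⟩

theorem bijective_of_map_of_eq_zpow (hη : IsBaumslagRationalization η) {n : X → ℤ}
    (hn : ∀ x, n x ≠ 0) {Ψ : D →* D}
    (hΨ : ∀ x, Ψ (η (FreeGroup.of x)) = η (FreeGroup.of x) ^ n x) :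
    Function.Bijective Ψ := by
  have hD := hη.1
  choose r hr using fun x => (hD (n x) (hn x)).2 (η (FreeGroup.of x))
  obtain ⟨Φ, hΦ⟩ := hη.exists_hom_apply_of hD r
  have hΨr : ∀ x, Ψ (r x) = η (FreeGroup.of x) := fun x =>
    (hD (n x) (hn x)).1 <| by simp only [← map_zpow, hr, hΨ]
  have hΨΦ : Ψ.comp Φ = MonoidHom.id D :=
    hη.hom_ext hD <| FreeGroup.ext_hom _ _ fun x => by simp [hΦ, hΨr]
  have hΦΨ : Φ.comp Ψ = MonoidHom.id D :=
    hη.hom_ext hD <| FreeGroup.ext_hom _ _ fun x => by simp [hΨ, hΦ, hr]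
  exact (MonoidHom.toMulEquiv Ψ Φ hΦΨ hΨΦ).bijective

end IsBaumslagRationalization

/-- Let `η : F(X) → D` be the Baumslag rationalization of the free group on `X`
and let `n` assign to each `x ∈ X` a positive integer. Then the (unique)
endomorphism `Ψ` of `D` with `Ψ(η(x)) = η(x) ^ n x` for all `x ∈ X` is an
automorphism, i.e. bijective. -/
theorem power_endomorphism_of_free_Q_group_is_automorphism
    {X : Type} {D : Type} [Group D]
    (η : FreeGroup X →* D) (hη : IsBaumslagRationalization η)
    (n : X → ℕ) (hn : ∀ x, 1 ≤ n x)
    (Ψ : D →* D) (hΨ : ∀ x : X, Ψ (η (FreeGroup.of x)) = η (FreeGroup.of x) ^ n x) :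
    Function.Bijective Ψ :=
  hη.bijective_of_map_of_eq_zpow (n := fun x => (n x : ℤ)) (fun x => by have := hn x; omega)
    (fun x => by simpa only [zpow_natCast] using hΨ x)
end

section
/- (Radin–Sadun) Let p and q be odd positive integers. In the special orthogonal group SO(3) of 3×3 real matrices, let R_x be the rotation by angle 2π/p about the x-axis, i.e. the matrix with rows (1,0,0), (0, cos(2π/p), −sin(2π/p)), (0, sin(2π/p), cos(2π/p)), and let R_z be the rotation by angle 2π/q about the z-axis, i.e. the matrix with rows (cos(2π/q), −sin(2π/q), 0), (sin(2π/q), cos(2π/q), 0), (0,0,1). Then the subgroup G(p,q) = ⟨R_x, R_z⟩ of SO(3) is isomorphic to the free product ℤ/p * ℤ/q; equivalently, the group homomorphism from the free product (ℤ/p) * (ℤ/q) to SO(3) sending the generator of ℤ/p to R_x and the generator of ℤ/q to R_z is injective. -/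
/-!
Fix a valuation `v` on `ℂ` with `v 2 < 1` (that of a valuation subring of `ℂ` in which `2` is not
a unit). Let `n` be odd, `n ∤ k` and `ζ = exp (2πi/n)`. Every factor of `∏_{0<j<n} (1 - ζʲ) = n`
has valuation at most `1`, and `v n = 1` because `n` is odd, so each factor has valuation `1`; in
particular `v (ζ²ᵏ - 1) = 1`. Hence `2 cos (2πk/n) = ζ⁻ᵏ ((ζ²ᵏ - 1) + 2)` and
`2 sin (2πk/n) = -i ζ⁻ᵏ (ζ²ᵏ - 1)` have valuation `1`, i.e. `cos` and `sin` both have valuation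
`(v 2)⁻¹ > 1`. Measuring vectors of `ℝ³` with `v`, nontrivial powers of `Rx` then send
`Z = {|w₀| = |w₁|, |w₂| < |w₁|}` into `X = {|w₀| < |w₁|, |w₂| ≤ |w₁|}` and those of `Rz` send `X`
into `Z`, and the ping-pong lemma applies.
-/

open Real

/-- `SO3` is the special orthogonal group of `3 × 3` real matrices: the subgroup of the
orthogonal group (matrices `A` with `AᵀA = 1`) consisting of matrices of determinant `1`. -/
def SO3 : Subgroup (Matrix.orthogonalGroup (Fin 3) ℝ) where
  carrier := {A | Matrix.det (A : Matrix (Fin 3) (Fin 3) ℝ) = 1}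
  one_mem' := by simp
  mul_mem' := by
    intro a b ha hb
    simp only [Set.mem_setOf_eq] at *
    rw [Matrix.UnitaryGroup.mul_val, Matrix.det_mul, ha, hb, mul_one]
  inv_mem' := by
    intro a ha
    simp only [Set.mem_setOf_eq] at *
    rw [Matrix.UnitaryGroup.inv_val, Matrix.star_eq_conjTranspose, Matrix.det_conjTranspose,
      ha, star_one]

open Matrix Cardinal Pointwise

universe u

namespace Valuation

variable {R Γ₀ : Type*} [Ring R] [LinearOrderedCommMonoidWithZero Γ₀] (v : Valuation R Γ₀)

theorem map_eq_one_of_pow_eq_one {x : R} {n : ℕ} (hn : n ≠ 0) (hx : x ^ n = 1) : v x = 1 := by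
  rw [← pow_eq_one_iff_of_nonneg zero_le hn, ← map_pow, hx, map_one]

theorem map_natCast_le_one (n : ℕ) : v n ≤ 1 := by
  induction n with
  | zero => simp
  | succ n ih => exact Nat.cast_succ (R := R) n ▸ (v.map_add _ _).trans (max_le ih v.map_one.le)

theorem map_natCast_eq_one_of_odd (h2 : v 2 < 1) {n : ℕ} (hn : Odd n) : v n = 1 := by
  obtain ⟨m, rfl⟩ := hn
  have h2m : v (2 * m) < v 1 := by
    rw [map_mul, map_one]; exact mul_lt_one_of_lt_of_le h2 (v.map_natCast_le_one m)
  push_cast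
  rw [v.map_add_eq_of_lt_right h2m, map_one]

end Valuation

theorem ValuationSubring.exists_valuation_two_lt_one (K : Type*) [Field K] [CharZero K] :
    ∃ V : ValuationSubring K, V.valuation 2 < 1 := by
  have h2 : Ideal.span {(2 : (⊥ : Subring K))} ≠ ⊤ := by
    rw [Ne, Ideal.span_singleton_eq_top, isUnit_iff_exists_inv]
    rintro ⟨⟨x, hx⟩, hx2⟩
    obtain ⟨n, rfl⟩ := Subring.mem_bot.mp hx
    have : ((2 * n : ℤ) : K) = ((1 : ℤ) : K) := by push_cast; exact congrArg Subtype.val hx2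
    have := Int.cast_injective this
    omega
  obtain ⟨V, -, hV⟩ := Ideal.image_subset_nonunits_valuationSubring _ h2
  exact ⟨V, V.mem_nonunits_iff.mp (hV ⟨2, Ideal.mem_span_singleton_self _, rfl⟩)⟩

namespace IsPrimitiveRoot

section CommRing

variable {R Γ₀ : Type*} [CommRing R] [LinearOrderedCommMonoidWithZero Γ₀] (v : Valuation R Γ₀)
  {ζ : R} {n : ℕ}

theorem valuation_eq_one (hζ : IsPrimitiveRoot ζ n) (hn : n ≠ 0) : v ζ = 1 :=
  v.map_eq_one_of_pow_eq_one hn hζ.pow_eq_one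

theorem valuation_pow_sub_one [IsDomain R] (hζ : IsPrimitiveRoot ζ n) (h2 : v 2 < 1)
    (hn : Odd n) {k : ℕ} (hk : ¬ n ∣ k) : v (ζ ^ k - 1) = 1 := by
  obtain ⟨m, rfl⟩ : ∃ m, n = m + 1 := ⟨n - 1, by have := hn.pos; omega⟩
  have hle : ∀ j ∈ Finset.range m, v (1 - ζ ^ (j + 1)) ≤ 1 := fun j _ =>
    (v.map_sub _ _).trans <| max_le v.map_one.le <| by
      rw [map_pow, hζ.valuation_eq_one v m.succ_ne_zero, one_pow]
  have hprod : ∏ j ∈ Finset.range m, v (1 - ζ ^ (j + 1)) = 1 := by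
    rw [← map_prod, hζ.prod_one_sub_pow_eq_order, ← Nat.cast_succ,
      v.map_natCast_eq_one_of_odd h2 hn]
  have hr : k % (m + 1) ≠ 0 := fun h => hk (Nat.dvd_of_mod_eq_zero h)
  have hmem : k % (m + 1) - 1 ∈ Finset.range m := by
    have : k % (m + 1) < m + 1 := Nat.mod_lt _ m.succ_pos
    rw [Finset.mem_range]; omega
  have := (Finset.prod_eq_one_iff_of_le_one' hle).mp hprod _ hmem
  rwa [Nat.sub_add_cancel (Nat.pos_of_ne_zero hr), ← Valuation.map_neg, neg_sub,
    hζ.eq_orderOf, pow_mod_orderOf] at this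

theorem valuation_pow_two_mul_sub_one [IsDomain R] (hζ : IsPrimitiveRoot ζ n) (h2 : v 2 < 1)
    (hn : Odd n) {k : ℕ} (hk : ¬ n ∣ k) : v (ζ ^ (2 * k) - 1) = 1 :=
  hζ.valuation_pow_sub_one v h2 hn <| by
    rwa [Nat.Coprime.dvd_mul_left (Nat.coprime_two_right.mpr hn)]

end CommRing

section Field

variable {K Γ₀ : Type*} [Field K] [LinearOrderedCommGroupWithZero Γ₀] (v : Valuation K Γ₀)
  {ζ : K} {n : ℕ}

theorem valuation_pow_inv (hζ : IsPrimitiveRoot ζ n) (hn : n ≠ 0) (k : ℕ) :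
    v (ζ ^ k)⁻¹ = 1 := by
  rw [map_inv₀, map_pow, hζ.valuation_eq_one v hn, one_pow, inv_one]

theorem valuation_pow_add_inv (hζ : IsPrimitiveRoot ζ n) (h2 : v 2 < 1) (hn : Odd n) {k : ℕ}
    (hk : ¬ n ∣ k) : v (ζ ^ k + (ζ ^ k)⁻¹) = 1 := by
  have hζ0 : ζ ^ k ≠ 0 := pow_ne_zero _ (hζ.ne_zero hn.pos.ne')
  have hsub := hζ.valuation_pow_two_mul_sub_one v h2 hn hk
  have : ζ ^ k + (ζ ^ k)⁻¹ = (ζ ^ k)⁻¹ * ((ζ ^ (2 * k) - 1) + 2) := by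
    field_simp; ring
  rw [this, map_mul, hζ.valuation_pow_inv v hn.pos.ne', one_mul,
    v.map_add_eq_of_lt_left (hsub.symm ▸ h2), hsub]

theorem valuation_pow_sub_inv (hζ : IsPrimitiveRoot ζ n) (h2 : v 2 < 1) (hn : Odd n) {k : ℕ}
    (hk : ¬ n ∣ k) : v (ζ ^ k - (ζ ^ k)⁻¹) = 1 := by
  have hζ0 : ζ ^ k ≠ 0 := pow_ne_zero _ (hζ.ne_zero hn.pos.ne')
  have : ζ ^ k - (ζ ^ k)⁻¹ = (ζ ^ k)⁻¹ * (ζ ^ (2 * k) - 1) := by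
    field_simp; ring
  rw [this, map_mul, hζ.valuation_pow_inv v hn.pos.ne', one_mul,
    hζ.valuation_pow_two_mul_sub_one v h2 hn hk]

end Field

end IsPrimitiveRoot

namespace Complex

theorem exp_two_pi_mul_I_div_pow (n k : ℕ) :
    exp (2 * π * I / n) ^ k = exp ((k * (2 * π / n) : ℝ) * I) := by
  rw [← exp_nat_mul]; push_cast; ring_nf

theorem two_mul_cos_eq_pow_add_inv (n k : ℕ) :
    2 * (Real.cos (k * (2 * π / n)) : ℂ) =
      exp (2 * π * I / n) ^ k + (exp (2 * π * I / n) ^ k)⁻¹ := by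
  rw [exp_two_pi_mul_I_div_pow, ← exp_neg, ofReal_cos, two_cos, neg_mul]

theorem two_mul_sin_mul_I_eq_pow_sub_inv (n k : ℕ) :
    2 * (Real.sin (k * (2 * π / n)) : ℂ) * I =
      exp (2 * π * I / n) ^ k - (exp (2 * π * I / n) ^ k)⁻¹ := by
  rw [exp_two_pi_mul_I_div_pow, ← exp_neg, ofReal_sin, two_sin, neg_mul, mul_assoc, I_mul_I]; ring

variable {Γ₀ : Type*} [LinearOrderedCommGroupWithZero Γ₀] (v : Valuation ℂ Γ₀)

theorem valuation_cos_eq_inv_two (h2 : v 2 < 1) {n k : ℕ} (hn : Odd n) (hk : ¬ n ∣ k) :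
    v (Real.cos (k * (2 * π / n))) = (v 2)⁻¹ := by
  have := (isPrimitiveRoot_exp n hn.pos.ne').valuation_pow_add_inv v h2 hn hk
  rw [← two_mul_cos_eq_pow_add_inv, map_mul] at this
  exact eq_inv_of_mul_eq_one_right this

theorem valuation_sin_eq_inv_two (h2 : v 2 < 1) {n k : ℕ} (hn : Odd n) (hk : ¬ n ∣ k) :
    v (Real.sin (k * (2 * π / n))) = (v 2)⁻¹ := by
  have := (isPrimitiveRoot_exp n hn.pos.ne').valuation_pow_sub_inv v h2 hn hk
  rw [← two_mul_sin_mul_I_eq_pow_sub_inv, map_mul, map_mul,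
    v.map_eq_one_of_pow_eq_one four_ne_zero I_pow_four, mul_one] at this
  exact eq_inv_of_mul_eq_one_right this

end Complex

section Rotations

variable {R : Type*} [CommRing R]

def rotX (c s : R) : Matrix (Fin 3) (Fin 3) R := !![1, 0, 0; 0, c, -s; 0, s, c]

def rotZ (c s : R) : Matrix (Fin 3) (Fin 3) R := !![c, -s, 0; s, c, 0; 0, 0, 1]

theorem rotX_mulVec (c s : R) (w : Fin 3 → R) :
    rotX c s *ᵥ w = ![w 0, c * w 1 - s * w 2, s * w 1 + c * w 2] := by
  ext i; fin_cases i <;> simp [rotX, mulVec, dotProduct, Fin.sum_univ_three]; ring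

theorem rotZ_mulVec (c s : R) (w : Fin 3 → R) :
    rotZ c s *ᵥ w = ![c * w 0 - s * w 1, s * w 0 + c * w 1, w 2] := by
  ext i; fin_cases i <;> simp [rotZ, mulVec, dotProduct, Fin.sum_univ_three]; ring

theorem rotX_mul (c s c' s' : R) :
    rotX c s * rotX c' s' = rotX (c * c' - s * s') (s * c' + c * s') := by
  ext i j; fin_cases i <;> fin_cases j <;> simp [rotX, mul_apply, Fin.sum_univ_three] <;> ring

theorem rotZ_mul (c s c' s' : R) :
    rotZ c s * rotZ c' s' = rotZ (c * c' - s * s') (s * c' + c * s') := by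
  ext i j; fin_cases i <;> fin_cases j <;> simp [rotZ, mul_apply, Fin.sum_univ_three] <;> ring

theorem rotX_cos_sin_pow (θ : ℝ) (n : ℕ) :
    rotX (cos θ) (sin θ) ^ n = rotX (cos (n * θ)) (sin (n * θ)) := by
  induction n with
  | zero => simp [rotX, one_fin_three]
  | succ n ih =>
    rw [pow_succ, ih, rotX_mul, Nat.cast_succ, add_one_mul, cos_add, sin_add]

theorem rotZ_cos_sin_pow (θ : ℝ) (n : ℕ) :
    rotZ (cos θ) (sin θ) ^ n = rotZ (cos (n * θ)) (sin (n * θ)) := by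
  induction n with
  | zero => simp [rotZ, one_fin_three]
  | succ n ih =>
    rw [pow_succ, ih, rotZ_mul, Nat.cast_succ, add_one_mul, cos_add, sin_add]

end Rotations

section PingPongSets

variable {R Γ₀ : Type*} [CommRing R] [LinearOrderedCommGroupWithZero Γ₀] (v : Valuation R Γ₀)

def pingSetX : Set (Fin 3 → R) := {w | v (w 0) < v (w 1) ∧ v (w 2) ≤ v (w 1)}

def pingSetZ : Set (Fin 3 → R) := {w | v (w 0) = v (w 1) ∧ v (w 2) < v (w 1)}

theorem disjoint_pingSetX_pingSetZ : Disjoint (pingSetX v) (pingSetZ v) :=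
  Set.disjoint_left.mpr fun _ hX hZ => hX.1.ne hZ.1

variable {v} {c s : R}

theorem rotX_mulVec_mem_pingSetX (hcs : v c = v s) (hc : 1 < v c) {w : Fin 3 → R}
    (hw : w ∈ pingSetZ v) : rotX c s *ᵥ w ∈ pingSetX v := by
  obtain ⟨h01, h21⟩ := hw
  have hw1 : 0 < v (w 1) := zero_le.trans_lt h21
  have hlt : v (s * w 2) < v (c * w 1) := by
    rw [map_mul, map_mul, ← hcs]; exact mul_lt_mul_of_pos_left h21 (zero_lt_one.trans hc)
  have h1 : v (c * w 1 - s * w 2) = v c * v (w 1) := by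
    rw [v.map_sub_eq_of_lt_left hlt, map_mul]
  rw [rotX_mulVec]
  refine ⟨?_, ?_⟩ <;> simp only [cons_val_zero, cons_val_one, cons_val_two, h1]
  · rw [h01]; exact (lt_mul_iff_one_lt_left hw1).mpr hc
  · refine (v.map_add _ _).trans (max_le ?_ ?_) <;> simp only [map_mul, ← hcs]
    · exact le_rfl
    · exact mul_le_mul_right h21.le _

theorem rotZ_mulVec_mem_pingSetZ (hcs : v c = v s) (hc : 1 < v c) {w : Fin 3 → R}
    (hw : w ∈ pingSetX v) : rotZ c s *ᵥ w ∈ pingSetZ v := by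
  obtain ⟨h01, h21⟩ := hw
  have hw1 : 0 < v (w 1) := zero_le.trans_lt h01
  have hlt : v c * v (w 0) < v c * v (w 1) := mul_lt_mul_of_pos_left h01 (zero_lt_one.trans hc)
  have h0 : v (c * w 0 - s * w 1) = v c * v (w 1) := by
    rw [v.map_sub_eq_of_lt_right (by rwa [map_mul, map_mul, ← hcs]), map_mul, hcs]
  have h1 : v (s * w 0 + c * w 1) = v c * v (w 1) := by
    rw [v.map_add_eq_of_lt_right (by rwa [map_mul, map_mul, ← hcs]), map_mul]
  rw [rotZ_mulVec]
  refine ⟨?_, ?_⟩ <;> simp only [cons_val_zero, cons_val_one, cons_val_two, h0, h1]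
  exact h21.trans_lt ((lt_mul_iff_one_lt_left hw1).mpr hc)

end PingPongSets

section RotationPingPong

variable {Γ₀ : Type*} [LinearOrderedCommGroupWithZero Γ₀] (v : Valuation ℂ Γ₀) (h2 : v 2 < 1)
  {n k : ℕ} (hn : Odd n) (hk : ¬ n ∣ k)
include h2 hn hk

theorem one_lt_valuation_cos :
    1 < (v.comap Complex.ofRealHom) (cos (k * (2 * π / n))) := by
  rw [Valuation.comap_apply, Complex.ofRealHom_eq_coe, Complex.valuation_cos_eq_inv_two v h2 hn hk]
  exact (one_lt_inv₀ (v.pos_iff.mpr two_ne_zero)).mpr h2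

theorem valuation_cos_eq_valuation_sin :
    (v.comap Complex.ofRealHom) (cos (k * (2 * π / n))) =
      (v.comap Complex.ofRealHom) (sin (k * (2 * π / n))) := by
  simp only [Valuation.comap_apply, Complex.ofRealHom_eq_coe,
    Complex.valuation_cos_eq_inv_two v h2 hn hk, Complex.valuation_sin_eq_inv_two v h2 hn hk]

theorem pow_smul_pingSetZ_subset_pingSetX {R : orthogonalGroup (Fin 3) ℝ}
    (hR : (R : Matrix (Fin 3) (Fin 3) ℝ) = rotX (cos (2 * π / n)) (sin (2 * π / n))) :
    R ^ k • pingSetZ (v.comap Complex.ofRealHom) ⊆ pingSetX (v.comap Complex.ofRealHom) := by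
  rintro _ ⟨w, hw, rfl⟩
  change ((R ^ k : orthogonalGroup (Fin 3) ℝ) : Matrix (Fin 3) (Fin 3) ℝ) *ᵥ w ∈ _
  rw [SubmonoidClass.coe_pow, hR, rotX_cos_sin_pow]
  exact rotX_mulVec_mem_pingSetX (valuation_cos_eq_valuation_sin v h2 hn hk)
    (one_lt_valuation_cos v h2 hn hk) hw

theorem pow_smul_pingSetX_subset_pingSetZ {R : orthogonalGroup (Fin 3) ℝ}
    (hR : (R : Matrix (Fin 3) (Fin 3) ℝ) = rotZ (cos (2 * π / n)) (sin (2 * π / n))) :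
    R ^ k • pingSetX (v.comap Complex.ofRealHom) ⊆ pingSetZ (v.comap Complex.ofRealHom) := by
  rintro _ ⟨w, hw, rfl⟩
  change ((R ^ k : orthogonalGroup (Fin 3) ℝ) : Matrix (Fin 3) (Fin 3) ℝ) *ᵥ w ∈ _
  rw [SubmonoidClass.coe_pow, hR, rotZ_cos_sin_pow]
  exact rotZ_mulVec_mem_pingSetZ (valuation_cos_eq_valuation_sin v h2 hn hk)
    (one_lt_valuation_cos v h2 hn hk) hw

end RotationPingPong

namespace Monoid.Coprod

instance {M N : Type*} [Monoid M] [Monoid N] [Subsingleton M] [Subsingleton N] :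
    Subsingleton (M ∗ N) := by
  refine subsingleton_of_forall_eq 1 fun x => ?_
  induction x using induction_on with
  | inl m => rw [Subsingleton.elim m 1, map_one]
  | inr n => rw [Subsingleton.elim n 1, map_one]
  | mul x y hx hy => rw [hx, hy, mul_one]

variable {H₁ H₂ : Type u} [Group H₁] [Group H₂]

instance instGroupCond : ∀ b : Bool, Group (cond b H₁ H₂)
  | true => ‹Group H₁›
  | false => ‹Group H₂›

noncomputable def toCoprodI : Coprod H₁ H₂ →* CoprodI fun b => cond b H₁ H₂ :=
  lift (CoprodI.of (M := fun b => cond b H₁ H₂) (i := true))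
    (CoprodI.of (M := fun b => cond b H₁ H₂) (i := false))

noncomputable def ofCoprodI : (CoprodI fun b => cond b H₁ H₂) →* Coprod H₁ H₂ :=
  CoprodI.lift fun | true => inl | false => inr

theorem ofCoprodI_comp_toCoprodI :
    (ofCoprodI (H₁ := H₁) (H₂ := H₂)).comp toCoprodI = MonoidHom.id _ := by
  apply hom_ext <;> ext <;> simp [toCoprodI, ofCoprodI]

theorem toCoprodI_injective : Function.Injective (toCoprodI (H₁ := H₁) (H₂ := H₂)) :=
  Function.LeftInverse.injective (g := ofCoprodI) (DFunLike.congr_fun ofCoprodI_comp_toCoprodI)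

theorem lift_injective_of_ping_pong {G α : Type*} [Group G] [MulAction G α]
    (f₁ : H₁ →* G) (f₂ : H₂ →* G) (hcard : 3 ≤ #H₁ ∨ 3 ≤ #H₂) {X₁ X₂ : Set α}
    (hX₁ : X₁.Nonempty) (hX₂ : X₂.Nonempty) (hX : Disjoint X₁ X₂)
    (hf₁ : ∀ h ≠ 1, f₁ h • X₂ ⊆ X₁) (hf₂ : ∀ h ≠ 1, f₂ h • X₁ ⊆ X₂) :
    Function.Injective (lift f₁ f₂) := by
  let F : ∀ b, cond b H₁ H₂ →* G := fun | true => f₁ | false => f₂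
  have hF : lift f₁ f₂ = (CoprodI.lift F).comp toCoprodI := by
    apply hom_ext <;> ext <;> simp [toCoprodI, F]
  rw [hF, MonoidHom.coe_comp]
  refine .comp (CoprodI.lift_injective_of_ping_pong F ?_ (fun b => cond b X₁ X₂) ?_ ?_ ?_)
    toCoprodI_injective
  · exact .inr (hcard.elim (⟨true, ·⟩) (⟨false, ·⟩))
  · rintro (_ | _) <;> assumption
  · rintro (_ | _) (_ | _) h <;> first | exact absurd rfl h | exact hX | exact hX.symm
  · rintro (_ | _) (_ | _) h <;> first | exact absurd rfl h | exact hf₁ | exact hf₂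

end Monoid.Coprod

namespace ZMod

variable {n : ℕ} [NeZero n]

theorem ofAdd_one_pow_val (a : Multiplicative (ZMod n)) :
    Multiplicative.ofAdd (1 : ZMod n) ^ (Multiplicative.toAdd a).val = a := by
  rw [← ofAdd_nsmul, nsmul_one, natCast_zmod_val, ofAdd_toAdd]

theorem not_dvd_val {a : ZMod n} (ha : a ≠ 0) : ¬ n ∣ a.val :=
  fun h => ha ((val_eq_zero a).mp (Nat.eq_zero_of_dvd_of_lt h a.val_lt))

theorem three_le_mk_multiplicative (hn : Odd n) (hn1 : n ≠ 1) :
    3 ≤ #(Multiplicative (ZMod n)) := by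
  rw [mk_fintype, Fintype.card_multiplicative, card]
  obtain ⟨m, rfl⟩ := hn
  exact_mod_cast (by omega : 3 ≤ 2 * m + 1)

end ZMod

theorem radin_sadun_free_product_of_rotations_general
    (p q : ℕ) (hp : Odd p) (hq : Odd q)
    (Rx Rz : SO3)
    (hRx : ((Rx : Matrix.orthogonalGroup (Fin 3) ℝ) : Matrix (Fin 3) (Fin 3) ℝ) =
      !![1, 0, 0;
         0, cos (2 * π / p), -sin (2 * π / p);
         0, sin (2 * π / p),  cos (2 * π / p)])
    (hRz : ((Rz : Matrix.orthogonalGroup (Fin 3) ℝ) : Matrix (Fin 3) (Fin 3) ℝ) =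
      !![cos (2 * π / q), -sin (2 * π / q), 0;
         sin (2 * π / q),  cos (2 * π / q), 0;
         0, 0, 1])
    (f : Monoid.Coprod (Multiplicative (ZMod p)) (Multiplicative (ZMod q)) →* SO3)
    (hfx : f (Monoid.Coprod.inl (Multiplicative.ofAdd (1 : ZMod p))) = Rx)
    (hfz : f (Monoid.Coprod.inr (Multiplicative.ofAdd (1 : ZMod q))) = Rz) :
    Function.Injective f := by
  have : NeZero p := ⟨hp.pos.ne'⟩
  have : NeZero q := ⟨hq.pos.ne'⟩
  by_cases htriv : p = 1 ∧ q = 1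
  · obtain ⟨rfl, rfl⟩ := htriv
    exact Function.injective_of_subsingleton f
  obtain ⟨V, hV⟩ := ValuationSubring.exists_valuation_two_lt_one ℂ
  let v := V.valuation.comap Complex.ofRealHom
  refine .of_comp (f := SO3.subtype) ?_
  rw [← MonoidHom.coe_comp, Monoid.Coprod.lift_unique (fg := SO3.subtype.comp f) rfl rfl]
  refine Monoid.Coprod.lift_injective_of_ping_pong _ _ ?_ (X₁ := pingSetX v) (X₂ := pingSetZ v)
    ⟨![0, 1, 0], by simp [pingSetX]⟩ ⟨![1, 1, 0], by simp [pingSetZ]⟩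
    (disjoint_pingSetX_pingSetZ v) ?_ ?_
  · rw [not_and_or] at htriv
    exact htriv.imp (ZMod.three_le_mk_multiplicative hp) (ZMod.three_le_mk_multiplicative hq)
  · intro a ha
    rw [MonoidHom.comp_apply, MonoidHom.comp_apply, ← ZMod.ofAdd_one_pow_val a, map_pow, map_pow,
      hfx, map_pow]
    exact pow_smul_pingSetZ_subset_pingSetX _ hV hp (ZMod.not_dvd_val (toAdd_eq_zero.not.mpr ha)) hRx
  · intro a ha
    rw [MonoidHom.comp_apply, MonoidHom.comp_apply, ← ZMod.ofAdd_one_pow_val a, map_pow, map_pow,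
      hfz, map_pow]
    exact pow_smul_pingSetX_subset_pingSetZ _ hV hq (ZMod.not_dvd_val (toAdd_eq_zero.not.mpr ha)) hRz

/-- (Radin–Sadun) For odd positive integers `p` and `q`, the subgroup of `SO(3)` generated by
the rotation `Rx` by `2π/p` about the `x`-axis and the rotation `Rz` by `2π/q` about the
`z`-axis is isomorphic to the free product `ℤ/p * ℤ/q`: the homomorphism from
`ℤ/p ∗ ℤ/q` sending the generators to `Rx` and `Rz` is injective. -/
theorem radin_sadun_free_product_of_rotations
    (p q : ℕ) (hp : Odd p) (hq : Odd q) (hp0 : 0 < p) (hq0 : 0 < q)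
    (Rx Rz : SO3)
    (hRx : ((Rx : Matrix.orthogonalGroup (Fin 3) ℝ) : Matrix (Fin 3) (Fin 3) ℝ) =
      !![1, 0, 0;
         0, cos (2 * π / p), -sin (2 * π / p);
         0, sin (2 * π / p),  cos (2 * π / p)])
    (hRz : ((Rz : Matrix.orthogonalGroup (Fin 3) ℝ) : Matrix (Fin 3) (Fin 3) ℝ) =
      !![cos (2 * π / q), -sin (2 * π / q), 0;
         sin (2 * π / q),  cos (2 * π / q), 0;
         0, 0, 1])
    (f : Monoid.Coprod (Multiplicative (ZMod p)) (Multiplicative (ZMod q)) →* SO3)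
    (hfx : f (Monoid.Coprod.inl (Multiplicative.ofAdd (1 : ZMod p))) = Rx)
    (hfz : f (Monoid.Coprod.inr (Multiplicative.ofAdd (1 : ZMod q))) = Rz) :
    Function.Injective f :=
  radin_sadun_free_product_of_rotations_general p q hp hq Rx Rz hRx hRz f hfx hfz
end

section
/- (Levi) Let G and H be groups and let π : G * H → G × H be the canonical homomorphism from the free product to the direct product (restricting to the identity on each factor). Then the kernel G □ H = Ker(π) is a free group, freely generated by the commutators [g,h] = g h g⁻¹ h⁻¹ for g ∈ G \ {1} and h ∈ H \ {1} (where g and h are viewed inside G * H via the canonical inclusions); equivalently, the group homomorphism from the free group on the set (G \ {1}) × (H \ {1}) to G * H sending (g,h) to [g,h] is injective with image exactly Ker(π). -/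
/-!
Every element of `G ∗ H` can be written uniquely as `ι k * a * b` with `k` in the free group on
the pairs `(a, b)`, `a ∈ G \ {1}`, `b ∈ H \ {1}`, and `ι` the map sending `(a, b)` to `[a, b]`.
Uniqueness is shown by letting `G ∗ H` act on the right of the set of such triples `(k, a, b)`,
mimicking right multiplication: `b` absorbs `h ∈ H`, and multiplying by `g ∈ G` is made possible
by `[a, b] [ag, b]⁻¹ ag b = a b g`. Evaluating triples intertwines this action with right
multiplication, and on triples `(k, 1, 1)` the element `ι k'` acts by `k ↦ k k'`. Hence `ι` is
injective, and any `w` in the kernel equals the evaluation of `(1, 1, 1) · w = (k, a, b)`, where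
`(a, b) = 1` since `w ↦ (a, b)` is the projection to `G × H`; so `w = ι k`.
-/

/-- The canonical homomorphism from the free product `G ∗ H` to the direct product `G × H`,
restricting to the identity on each factor. -/
def coprodToProd (G H : Type*) [Group G] [Group H] : Monoid.Coprod G H →* G × H :=
  Monoid.Coprod.lift (MonoidHom.inl G H) (MonoidHom.inr G H)

open scoped commutatorElement

/-- The homomorphism from the free group on the set `(G \ {1}) × (H \ {1})` to the free
product `G ∗ H` sending `(g, h)` to the commutator `[g, h] = g h g⁻¹ h⁻¹`. -/
def commutatorsHom (G H : Type*) [Group G] [Group H] :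
    FreeGroup ({g : G // g ≠ 1} × {h : H // h ≠ 1}) →* Monoid.Coprod G H :=
  FreeGroup.lift fun p => ⁅(Monoid.Coprod.inl (p.1 : G) : Monoid.Coprod G H), (Monoid.Coprod.inr (p.2 : H) : Monoid.Coprod G H)⁆

namespace Levi

variable {G H : Type*} [Group G] [Group H]

abbrev Generators (G H : Type*) [Group G] [Group H] : Type _ :=
  {g : G // g ≠ 1} × {h : H // h ≠ 1}

open Classical in
/-- The free generator `(a, b)`, or `1` when `a = 1` or `b = 1` (then `[a, b] = 1`). -/
noncomputable def freeCommutator (a : G) (b : H) : FreeGroup (Generators G H) :=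
  if ha : a = 1 then 1 else if hb : b = 1 then 1 else FreeGroup.of (⟨a, ha⟩, ⟨b, hb⟩)

lemma freeCommutator_one_left (b : H) : freeCommutator (1 : G) b = 1 := by
  simp [freeCommutator]

lemma freeCommutator_one_right (a : G) : freeCommutator a (1 : H) = 1 := by
  simp [freeCommutator]

lemma freeCommutator_coe (x : Generators G H) :
    freeCommutator (x.1 : G) (x.2 : H) = FreeGroup.of x := by
  simp [freeCommutator, x.1.2, x.2.2]

lemma commutatorsHom_freeCommutator (a : G) (b : H) :
    commutatorsHom G H (freeCommutator a b) =
      ⁅(Monoid.Coprod.inl a : Monoid.Coprod G H), Monoid.Coprod.inr b⁆ := by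
  unfold freeCommutator
  split_ifs with ha hb
  · simp [ha]
  · simp [hb]
  · simp [commutatorsHom]

lemma coprodToProd_comp_commutatorsHom :
    (coprodToProd G H).comp (commutatorsHom G H) = 1 :=
  FreeGroup.ext_hom _ _ fun x => by
    simp [commutatorsHom, coprodToProd, commutatorElement_def, Prod.ext_iff]

/-- `⟨k, a, b⟩` stands for the element `ι k * a * b` of `G ∗ H`. -/
structure NormalForm (G H : Type*) [Group G] [Group H] where
  free : FreeGroup (Generators G H)
  left : G
  right : H

namespace NormalForm

def eval (p : NormalForm G H) : Monoid.Coprod G H :=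
  commutatorsHom G H p.free * Monoid.Coprod.inl p.left * Monoid.Coprod.inr p.right

lemma coprodToProd_eval (p : NormalForm G H) : coprodToProd G H p.eval = (p.left, p.right) := by
  have hι : coprodToProd G H (commutatorsHom G H p.free) = 1 :=
    DFunLike.congr_fun coprodToProd_comp_commutatorsHom p.free
  rw [eval, map_mul, map_mul, hι]
  simp [coprodToProd]

noncomputable def mulInl (g : G) (p : NormalForm G H) : NormalForm G H :=
  ⟨p.free * freeCommutator p.left p.right * (freeCommutator (p.left * g) p.right)⁻¹,
    p.left * g, p.right⟩

def mulInr (h : H) (p : NormalForm G H) : NormalForm G H :=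
  ⟨p.free, p.left, p.right * h⟩

noncomputable def mulInlHom : G →* (Function.End (NormalForm G H))ᵐᵒᵖ where
  toFun g := .op (mulInl g)
  map_one' := congrArg MulOpposite.op <| funext fun p => by simp [mulInl]; rfl
  map_mul' g g' := MulOpposite.unop_injective <| funext fun p =>
    show mulInl (g * g') p = mulInl g' (mulInl g p) by
      simp only [mulInl, mul_assoc, NormalForm.mk.injEq, and_true]
      group

def mulInrHom : H →* (Function.End (NormalForm G H))ᵐᵒᵖ where
  toFun h := .op (mulInr h)
  map_one' := congrArg MulOpposite.op <| funext fun p => by simp [mulInr]; rfl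
  map_mul' h h' := MulOpposite.unop_injective <| funext fun p =>
    show mulInr (h * h') p = mulInr h' (mulInr h p) by simp [mulInr, mul_assoc]

noncomputable def rightAction : Monoid.Coprod G H →* (Function.End (NormalForm G H))ᵐᵒᵖ :=
  Monoid.Coprod.lift mulInlHom mulInrHom

noncomputable def rightMul (p : NormalForm G H) (w : Monoid.Coprod G H) : NormalForm G H :=
  (rightAction w).unop p

@[simp]
lemma rightMul_one (p : NormalForm G H) : p.rightMul 1 = p := by
  simp [rightMul]; rfl

lemma rightMul_mul (p : NormalForm G H) (w w' : Monoid.Coprod G H) :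
    p.rightMul (w * w') = (p.rightMul w).rightMul w' := by
  simp [rightMul]; rfl

@[simp]
lemma rightMul_inl (p : NormalForm G H) (g : G) :
    p.rightMul (Monoid.Coprod.inl g) = mulInl g p := by
  simp [rightMul, rightAction]; rfl

@[simp]
lemma rightMul_inr (p : NormalForm G H) (h : H) :
    p.rightMul (Monoid.Coprod.inr h) = mulInr h p := by
  simp [rightMul, rightAction]; rfl

lemma rightMul_inv_eq_iff (p q : NormalForm G H) (w : Monoid.Coprod G H) :
    p.rightMul w⁻¹ = q ↔ p = q.rightMul w := by
  constructor <;> rintro rfl <;> simp [← rightMul_mul]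

lemma eval_rightMul (p : NormalForm G H) (w : Monoid.Coprod G H) :
    (p.rightMul w).eval = p.eval * w := by
  induction w using Monoid.Coprod.induction_on generalizing p with
  | inl g =>
    simp only [rightMul_inl, eval, mulInl, map_mul, map_inv, commutatorsHom_freeCommutator]
    group
  | inr h => simp [eval, mulInr, mul_assoc]
  | mul w w' hw hw' => rw [rightMul_mul, hw', hw, mul_assoc]

lemma rightMul_commutatorsHom (k₀ k : FreeGroup (Generators G H)) :
    (⟨k₀, 1, 1⟩ : NormalForm G H).rightMul (commutatorsHom G H k) = ⟨k₀ * k, 1, 1⟩ := by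
  induction k using FreeGroup.induction_on generalizing k₀ with
  | C1 => simp
  | of x =>
    rw [commutatorsHom, FreeGroup.lift_apply_of, commutatorElement_def,
      ← map_inv (Monoid.Coprod.inl (N := H)), ← map_inv (Monoid.Coprod.inr (M := G)),
      rightMul_mul, rightMul_mul, rightMul_mul]
    simp only [rightMul_inl, rightMul_inr, mulInl, mulInr]
    simp [freeCommutator_one_left, freeCommutator_one_right, freeCommutator_coe]
  | inv_of x hx => rw [map_inv, rightMul_inv_eq_iff, hx, inv_mul_cancel_right]
  | mul k k' hk hk' => rw [map_mul, rightMul_mul, hk, hk', mul_assoc]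

end NormalForm

end Levi

open Levi in
/-- (Levi) The kernel of the canonical homomorphism `G ∗ H → G × H` is a free group,
freely generated by the commutators `[g, h]` with `g ∈ G \ {1}` and `h ∈ H \ {1}`:
the homomorphism from the free group on `(G \ {1}) × (H \ {1})` sending `(g, h)` to
`[g, h]` is injective with range exactly the kernel. -/
theorem levi_kernel_of_coprod_to_prod_is_free
    (G H : Type*) [Group G] [Group H] :
    Function.Injective (commutatorsHom G H) ∧
      (commutatorsHom G H).range = (coprodToProd G H).ker := by
  let origin : NormalForm G H := ⟨1, 1, 1⟩
  have origin_rightMul_commutatorsHom (k : FreeGroup (Generators G H)) :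
      origin.rightMul (commutatorsHom G H k) = ⟨k, 1, 1⟩ := by
    simpa using NormalForm.rightMul_commutatorsHom 1 k
  have injective : Function.Injective (commutatorsHom G H) :=
    Function.LeftInverse.injective (g := fun w => (origin.rightMul w).free) fun k =>
      congrArg NormalForm.free (origin_rightMul_commutatorsHom k)
  have range_le_ker : (commutatorsHom G H).range ≤ (coprodToProd G H).ker :=
    (MonoidHom.range_le_ker_iff _ _).2 coprodToProd_comp_commutatorsHom
  refine ⟨injective, le_antisymm range_le_ker fun w hw => ?_⟩
  set p := origin.rightMul w
  have eval_p : p.eval = w := by simpa [origin, NormalForm.eval] using origin.eval_rightMul w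
  have p_left_right : (p.left, p.right) = 1 := by
    rw [← NormalForm.coprodToProd_eval, eval_p]
    exact hw
  obtain ⟨hleft, hright⟩ := Prod.mk_eq_one.1 p_left_right
  exact ⟨p.free, by rw [← eval_p, NormalForm.eval, hleft, hright]; simp⟩
end
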